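/- With the extended bounds and 1-marginals of the previous construction (from a {0,1}-valued (n,n,n)-array p), a feasible nonnegative integer (n+1,n+1,n+1)-array x with entry x_{n+1,n+1,n+1} = 2n exists if and only if there is a nonnegative integer (n,n,n)-array dominated by p with all 1-marginals equal to 1. Moreover, for any feasible extended array x, its restriction (x_{i,j,k})_{1≤i,j,k≤n} has all 1-marginals equal to 1 and is dominated by p if and only if x_{n+1,n+1,n+1} = 2n. -/

import Mathlib

/-
Feasibility forces zeros on the entries with two old indices and one new one, so the marginal
of an old index `i` reads `x(i,∞,∞) + (row sum of the restriction at i) = 1`, and the marginal of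
the new first (second) index reads `x(∞,∞,∞) + ∑ₖ x(∞,∞,k) + ∑ⱼ x(∞,j,∞) = 2n` (resp. with
`∑ᵢ x(i,∞,∞)`). Hence the restriction has unit marginals iff every entry with one old and two new
indices vanishes, iff the corner entry is `2n`. Conversely a unit-marginal table `z ≤ p` extends
by the corner entry `2n` and zeros elsewhere.
-/

/-- Extended entry upper bounds on (n+1,n+1,n+1)-arrays from a 0/1 array `p`
(index `none` is the new index n+1). -/
def extBound (n : ℕ) (p : Fin n → Fin n → Fin n → ℕ) :
    Option (Fin n) → Option (Fin n) → Option (Fin n) → ℕ := fun a b c =>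
  match a, b, c with
  | none, none, none => 2 * n
  | some _, some _, none => 0
  | some _, none, some _ => 0
  | none, some _, some _ => 0
  | some _, none, none => 1
  | none, some _, none => 1
  | none, none, some _ => 1
  | some i, some j, some k => p i j k

/-- Extended 1-marginal values: 1 on old indices, 2n on the new index. -/
def extMarg (n : ℕ) : Option (Fin n) → ℕ := fun a =>
  match a with
  | none => 2 * n
  | some _ => 1

/-- The explicit witness array. -/
def extWitness (n : ℕ) :
    Option (Fin n) → Option (Fin n) → Option (Fin n) → ℕ := fun a b c =>
  match a, b, c with
  | some _, none, none => 1
  | none, some _, none => 1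
  | none, none, some _ => 1
  | _, _, _ => 0

open Finset

structure ExtFeasible (n : ℕ) (p : Fin n → Fin n → Fin n → ℕ)
    (x : Option (Fin n) → Option (Fin n) → Option (Fin n) → ℕ) : Prop where
  le_extBound : ∀ a b c, x a b c ≤ extBound n p a b c
  sum_fst : ∀ a, ∑ b, ∑ c, x a b c = extMarg n a
  sum_snd : ∀ b, ∑ a, ∑ c, x a b c = extMarg n b
  sum_thd : ∀ c, ∑ a, ∑ b, x a b c = extMarg n c

def HasUnitMarginals {α β γ : Type*} [Fintype α] [Fintype β] [Fintype γ]
    (z : α → β → γ → ℕ) : Prop :=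
  (∀ i, ∑ j, ∑ k, z i j k = 1) ∧ (∀ j, ∑ i, ∑ k, z i j k = 1) ∧ (∀ k, ∑ i, ∑ j, z i j k = 1)

def restrictOld {n : ℕ} (x : Option (Fin n) → Option (Fin n) → Option (Fin n) → ℕ) :
    Fin n → Fin n → Fin n → ℕ :=
  fun i j k => x (some i) (some j) (some k)

def cornerExtension (n : ℕ) (z : Fin n → Fin n → Fin n → ℕ) :
    Option (Fin n) → Option (Fin n) → Option (Fin n) → ℕ := fun a b c =>
  match a, b, c with
  | some i, some j, some k => z i j k
  | none, none, none => 2 * n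
  | _, _, _ => 0

namespace ExtFeasible

variable {n : ℕ} {p : Fin n → Fin n → Fin n → ℕ}
  {x : Option (Fin n) → Option (Fin n) → Option (Fin n) → ℕ}

theorem restrictOld_le (hx : ExtFeasible n p x) (i j k : Fin n) : restrictOld x i j k ≤ p i j k :=
  hx.le_extBound (some i) (some j) (some k)

theorem eq_zero_old_old_new (hx : ExtFeasible n p x) (i j : Fin n) : x (some i) (some j) none = 0 :=
  Nat.le_zero.mp (hx.le_extBound _ _ _)

theorem eq_zero_old_new_old (hx : ExtFeasible n p x) (i k : Fin n) : x (some i) none (some k) = 0 :=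
  Nat.le_zero.mp (hx.le_extBound _ _ _)

theorem eq_zero_new_old_old (hx : ExtFeasible n p x) (j k : Fin n) : x none (some j) (some k) = 0 :=
  Nat.le_zero.mp (hx.le_extBound _ _ _)

theorem sum_fst_some (hx : ExtFeasible n p x) (i : Fin n) :
    x (some i) none none + ∑ j, ∑ k, restrictOld x i j k = 1 := by
  simpa [Fintype.sum_option, extMarg, restrictOld, hx.eq_zero_old_old_new,
    hx.eq_zero_old_new_old] using hx.sum_fst (some i)

theorem sum_snd_some (hx : ExtFeasible n p x) (j : Fin n) :
    x none (some j) none + ∑ i, ∑ k, restrictOld x i j k = 1 := by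
  simpa [Fintype.sum_option, extMarg, restrictOld, hx.eq_zero_old_old_new,
    hx.eq_zero_new_old_old] using hx.sum_snd (some j)

theorem sum_thd_some (hx : ExtFeasible n p x) (k : Fin n) :
    x none none (some k) + ∑ i, ∑ j, restrictOld x i j k = 1 := by
  simpa [Fintype.sum_option, extMarg, restrictOld, hx.eq_zero_old_new_old,
    hx.eq_zero_new_old_old] using hx.sum_thd (some k)

theorem sum_fst_none (hx : ExtFeasible n p x) :
    x none none none + ∑ k, x none none (some k) + ∑ j, x none (some j) none = 2 * n := by
  have h := hx.sum_fst none
  simp only [Fintype.sum_option, hx.eq_zero_new_old_old, sum_const_zero, add_zero,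
    extMarg] at h
  omega

theorem sum_snd_none (hx : ExtFeasible n p x) :
    x none none none + ∑ k, x none none (some k) + ∑ i, x (some i) none none = 2 * n := by
  have h := hx.sum_snd none
  simp only [Fintype.sum_option, hx.eq_zero_old_new_old, sum_const_zero, add_zero,
    extMarg] at h
  omega

theorem corner_eq_of_hasUnitMarginals (hx : ExtFeasible n p x)
    (h : HasUnitMarginals (restrictOld x)) :
    x none none none = 2 * n := by
  obtain ⟨-, hsnd, hthd⟩ := h
  have hj : ∀ j, x none (some j) none = 0 := fun j => by
    simpa [hsnd j] using hx.sum_snd_some j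
  have hk : ∀ k, x none none (some k) = 0 := fun k => by
    simpa [hthd k] using hx.sum_thd_some k
  simpa [hj, hk] using hx.sum_fst_none

theorem hasUnitMarginals_of_corner_eq (hx : ExtFeasible n p x) (h : x none none none = 2 * n) :
    HasUnitMarginals (restrictOld x) := by
  have hfst := hx.sum_fst_none
  have hsnd := hx.sum_snd_none
  have hi : ∑ i, x (some i) none none = 0 := by omega
  have hj : ∑ j, x none (some j) none = 0 := by omega
  have hk : ∑ k, x none none (some k) = 0 := by omega
  rw [sum_eq_zero_iff] at hi hj hk
  refine ⟨fun i => ?_, fun j => ?_, fun k => ?_⟩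
  · simpa [hi i (mem_univ i)] using hx.sum_fst_some i
  · simpa [hj j (mem_univ j)] using hx.sum_snd_some j
  · simpa [hk k (mem_univ k)] using hx.sum_thd_some k

theorem hasUnitMarginals_iff_corner_eq (hx : ExtFeasible n p x) :
    HasUnitMarginals (restrictOld x) ↔ x none none none = 2 * n :=
  ⟨hx.corner_eq_of_hasUnitMarginals, hx.hasUnitMarginals_of_corner_eq⟩

end ExtFeasible

theorem cornerExtension_extFeasible {n : ℕ} {p z : Fin n → Fin n → Fin n → ℕ}
    (hzp : ∀ i j k, z i j k ≤ p i j k) (hz : HasUnitMarginals z) :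
    ExtFeasible n p (cornerExtension n z) := by
  obtain ⟨hfst, hsnd, hthd⟩ := hz
  refine ⟨?_, ?_, ?_, ?_⟩
  · rintro (_ | i) (_ | j) (_ | k) <;> simp [cornerExtension, extBound, hzp]
  · rintro (_ | i) <;> simp [cornerExtension, Fintype.sum_option, extMarg, hfst]
  · rintro (_ | j) <;> simp [cornerExtension, Fintype.sum_option, extMarg, hsnd]
  · rintro (_ | k) <;> simp [cornerExtension, Fintype.sum_option, extMarg, hthd]

theorem corner_full_iff_matching (n : ℕ)
    (p : Fin n → Fin n → Fin n → ℕ) :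
    ((∃ x : Option (Fin n) → Option (Fin n) → Option (Fin n) → ℕ,
      (∀ a b c, x a b c ≤ extBound n p a b c) ∧
      (∀ a, ∑ b, ∑ c, x a b c = extMarg n a) ∧
      (∀ b, ∑ a, ∑ c, x a b c = extMarg n b) ∧
      (∀ c, ∑ a, ∑ b, x a b c = extMarg n c) ∧
      x none none none = 2 * n) ↔
    (∃ z : Fin n → Fin n → Fin n → ℕ,
      (∀ i j k, z i j k ≤ p i j k) ∧
      (∀ i, ∑ j, ∑ k, z i j k = 1) ∧
      (∀ j, ∑ i, ∑ k, z i j k = 1) ∧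
      (∀ k, ∑ i, ∑ j, z i j k = 1))) ∧
    (∀ x : Option (Fin n) → Option (Fin n) → Option (Fin n) → ℕ,
      (∀ a b c, x a b c ≤ extBound n p a b c) →
      (∀ a, ∑ b, ∑ c, x a b c = extMarg n a) →
      (∀ b, ∑ a, ∑ c, x a b c = extMarg n b) →
      (∀ c, ∑ a, ∑ b, x a b c = extMarg n c) →
      (((∀ i j k, x (some i) (some j) (some k) ≤ p i j k) ∧
        (∀ i, ∑ j, ∑ k, x (some i) (some j) (some k) = 1) ∧
        (∀ j, ∑ i, ∑ k, x (some i) (some j) (some k) = 1) ∧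
        (∀ k, ∑ i, ∑ j, x (some i) (some j) (some k) = 1)) ↔
        x none none none = 2 * n)) := by
  refine ⟨⟨?_, ?_⟩, fun x hxb hA hB hC => ?_⟩
  · rintro ⟨x, hxb, hA, hB, hC, hcorner⟩
    have hx : ExtFeasible n p x := ⟨hxb, hA, hB, hC⟩
    exact ⟨restrictOld x, hx.restrictOld_le, hx.hasUnitMarginals_of_corner_eq hcorner⟩
  · rintro ⟨z, hzp, hz⟩
    have hx := cornerExtension_extFeasible hzp hz
    exact ⟨cornerExtension n z, hx.le_extBound, hx.sum_fst, hx.sum_snd, hx.sum_thd, rfl⟩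
  · have hx : ExtFeasible n p x := ⟨hxb, hA, hB, hC⟩
    exact (and_iff_right hx.restrictOld_le).trans hx.hasUnitMarginals_iff_corner_eq
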